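/- Let K be a field of characteristic zero, n ≥ 1, d ≥ 0. The family of weighted d-complexes given by the products ∏_{j=2}^{n} ({1} − {j})^{k_j} over all tuples (k₂,…,kₙ) of nonnegative integers with ∑_{j=2}^n k_j = d+1 — equivalently the coefficient-functions of the polynomials ∏_{j=2}^n (x₁ − x_j)^{k_j} viewed as weightings of the complete d-complex Δ_{n,d} — is a basis of the K-vector space of balancings of Δ_{n,d}. In particular this space has dimension C(n+d−1, d+1). -/

import Mathlib

open scoped BigOperators
open MvPolynomial

/-- The multiplicity `m(T ⊆ σ) = ∏ i, C(σ i, T i)` of a multiset `T` in a multiset `σ`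
on `{1, …, n}` (multisets encoded as functions `Fin n → ℕ`). -/
def mult {n : ℕ} (T σ : Fin n → ℕ) : ℕ := ∏ i, (σ i).choose (T i)

/-- The complete `d`-complex `Δ_{n,d}` on `n` vertices: all multisets of cardinality
`d + 1` on `{1,…,n}`. -/
def completeComplex (n d : ℕ) : Finset (Fin n → ℕ) :=
  (Fintype.piFinset fun _ : Fin n => Finset.range (d + 2)).filter
    (fun σ => ∑ i, σ i = d + 1)

/-- The `K`-vector space of balancings of the complete `d`-complex `Δ_{n,d}`. -/
noncomputable def balancingSpace (K : Type*) [Field K] (n d : ℕ) :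
    Submodule K ((Fin n → ℕ) → K) :=
  (⨅ σ : {σ : Fin n → ℕ // σ ∉ completeComplex n d},
      LinearMap.ker (LinearMap.proj σ.1 : ((Fin n → ℕ) → K) →ₗ[K] K)) ⊓
  (⨅ T : {T : Fin n → ℕ // ∑ i, T i ≤ d},
      LinearMap.ker (∑ σ ∈ completeComplex n d, (mult T.1 σ : K) •
        (LinearMap.proj σ : ((Fin n → ℕ) → K) →ₗ[K] K)))

/-- The weighting of `Δ_{n,d}` given by the coefficients of the polynomial
`∏_j (x₁ − x_j)^{k j}` (the exponent vector `k` has `k 1 = 0`, so the factor for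
`j = 1` is trivial); this is the product of the balanced `0`-complexes
`{1} − {j}` with multiplicities `k j`. -/
noncomputable def productWeighting (K : Type*) [Field K] {n : ℕ} (hn : 0 < n)
    (k : Fin n → ℕ) : (Fin n → ℕ) → K := fun σ =>
  MvPolynomial.coeff (Finsupp.equivFunOnFinite.symm σ)
    (∏ j : Fin n, ((X (⟨0, hn⟩ : Fin n) : MvPolynomial (Fin n) K) - X j) ^ (k j))

/-!
If `P` is homogeneous of degree `d + 1` and `P(x + 1) = P(x)`, its coefficients form a balancing:
the `T`-coefficient of `P(x + 1)` is `∑_σ m(T ⊆ σ) P_σ`, and for `|T| ≤ d` it equals the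
vanishing `T`-coefficient of `P`. Every product `∏_j (x₁ − x_j)^{k_j}` is such a polynomial.
Modulo `x₁` it is `± x^k`, so on the faces avoiding vertex `1` its weighting is `±` the
indicator of `k`, which gives linear independence. A balancing vanishing on those faces
vanishes everywhere, by induction on the multiplicity of vertex `1`, so restricting to them
embeds the balancing space into a space of dimension the number of such faces, i.e. of
multisets of size `d + 1` on `n − 1` vertices.
-/

open Finset Function

section Polynomial

variable {ι R : Type*}

lemma coeff_eq_of_X_dvd_sub [CommRing R] {P Q : MvPolynomial ι R} {i : ι} (h : X i ∣ P - Q)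
    {u : ι →₀ ℕ} (hu : u i = 0) : coeff u P = coeff u Q := by
  classical
  obtain ⟨S, hS⟩ := h
  rw [← sub_eq_zero, ← coeff_sub, hS, coeff_X_mul', if_neg (by simpa using hu)]

variable [Fintype ι]

lemma coeff_prod_X_add_one_pow [CommSemiring R] (m : ι → ℕ) (t : ι →₀ ℕ) :
    coeff t (∏ i, (X i + 1 : MvPolynomial ι R) ^ m i) = ∏ i, ((m i).choose (t i) : R) := by
  classical
  have expand (i : ι) : (X i + 1 : MvPolynomial ι R) ^ m i
      = ∑ j ∈ range (m i + 1), monomial (Finsupp.single i j) ((m i).choose j : R) := by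
    rw [add_pow]
    refine sum_congr rfl fun j _ => ?_
    rw [one_pow, mul_one, ← C_mul_X_pow_eq_monomial, mul_comm, map_natCast]
  simp_rw [expand, prod_univ_sum, ← monomial_sum_prod, ← Finsupp.equivFunOnFinite_symm_eq_sum,
    coeff_sum, coeff_monomial, Equiv.symm_apply_eq, sum_ite_eq']
  split_ifs with ht
  · rfl
  · obtain ⟨i, hi⟩ : ∃ i, m i < t i := by
      simpa [Fintype.mem_piFinset, Nat.lt_succ_iff] using ht
    exact (prod_eq_zero (mem_univ i) (by simp [Nat.choose_eq_zero_of_lt hi])).symm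

lemma coeff_aeval_X_add_one [CommSemiring R] {P : MvPolynomial ι R} {s : Finset (ι →₀ ℕ)}
    (hs : P.support ⊆ s) (t : ι →₀ ℕ) :
    coeff t (aeval (fun i => X i + 1) P) = ∑ u ∈ s, coeff u P * ∏ i, ((u i).choose (t i) : R) := by
  conv_lhs => rw [P.as_sum]
  rw [map_sum, coeff_sum, ← sum_subset hs (fun u _ hu => by simp [notMem_support_iff.1 hu])]
  refine sum_congr rfl fun u _ => ?_
  rw [aeval_monomial, Finsupp.prod_fintype _ _ (fun _ => pow_zero _), algebraMap_eq, coeff_C_mul,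
    coeff_prod_X_add_one_pow]

variable [CommRing R]

lemma isHomogeneous_prod_X_sub_X_pow (i : ι) (k : ι → ℕ) :
    (∏ j, (X i - X j : MvPolynomial ι R) ^ k j).IsHomogeneous (∑ j, k j) :=
  IsHomogeneous.prod _ _ _ fun j _ => by
    simpa using ((isHomogeneous_X R i).sub (isHomogeneous_X R j)).pow (k j)

lemma aeval_X_add_one_prod_X_sub_X_pow (i : ι) (k : ι → ℕ) :
    aeval (fun j => (X j + 1 : MvPolynomial ι R)) (∏ j, (X i - X j : MvPolynomial ι R) ^ k j)
      = ∏ j, (X i - X j) ^ k j := by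
  simp only [map_prod, map_pow, map_sub, aeval_X, add_sub_add_right_eq_sub]

lemma X_dvd_prod_X_sub_X_pow_sub (i : ι) (k : ι → ℕ) :
    X i ∣ ∏ j, (X i - X j : MvPolynomial ι R) ^ k j - ∏ j, (-X j) ^ k j := by
  rw [← Ideal.mem_span_singleton, ← Ideal.Quotient.eq, map_prod, map_prod]
  have h0 : Ideal.Quotient.mk (Ideal.span {(X i : MvPolynomial ι R)}) (X i) = 0 :=
    Ideal.Quotient.eq_zero_iff_mem.2 (Ideal.mem_span_singleton_self _)
  simp only [map_pow, map_sub, map_neg, h0, zero_sub]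

lemma prod_neg_X_pow (k : ι → ℕ) :
    ∏ j, (-X j : MvPolynomial ι R) ^ k j
      = monomial (Finsupp.equivFunOnFinite.symm k) ((-1) ^ ∑ j, k j) := by
  rw [Finsupp.equivFunOnFinite_symm_eq_sum, ← prod_pow_eq_pow_sum, monomial_sum_prod]
  refine prod_congr rfl fun j _ => ?_
  rw [neg_pow, X_pow_eq_monomial, ← mul_one ((-1 : R) ^ k j), ← C_mul_monomial]
  simp

lemma coeff_prod_X_sub_X_pow_of_apply_eq_zero [DecidableEq ι] (i : ι) (k σ : ι → ℕ)
    (hσ : σ i = 0) :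
    coeff (Finsupp.equivFunOnFinite.symm σ) (∏ j, (X i - X j : MvPolynomial ι R) ^ k j)
      = if σ = k then (-1) ^ (∑ j, k j) else 0 := by
  rw [coeff_eq_of_X_dvd_sub (X_dvd_prod_X_sub_X_pow_sub i k) hσ, prod_neg_X_pow, coeff_monomial]
  simp only [Finsupp.equivFunOnFinite.symm.injective.eq_iff, eq_comm]

end Polynomial

section Update

variable {ι : Type*} [Fintype ι] [DecidableEq ι] {σ : ι → ℕ} {i : ι} {m : ℕ}

lemma sum_update_add_one (hσ : σ i = m + 1) : ∑ j, update σ i m j + 1 = ∑ j, σ j := by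
  rw [sum_update_of_mem (mem_univ i), sum_eq_add_sum_sdiff_singleton_of_mem (mem_univ i) σ, hσ]
  ring

lemma apply_le_of_update_le {σ' : ι → ℕ} (hσ : σ i = m + 1) (hle : update σ i m ≤ σ')
    (hsum : ∑ j, σ' j = ∑ j, σ j) (hne : σ' ≠ σ) : σ' i ≤ m := by
  by_contra! h
  have hσσ' : σ ≤ σ' := fun j => by
    rcases eq_or_ne j i with rfl | hj
    · exact hσ.trans_le h
    · simpa [update_of_ne hj] using hle j
  exact hne (funext fun j =>
    ((sum_eq_sum_iff_of_le fun j _ => hσσ' j).1 hsum.symm j (mem_univ j)).symm)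

end Update

noncomputable def equivFinsuppAntidiagErase {ι : Type*} [Fintype ι] [DecidableEq ι] (i : ι)
    (N : ℕ) : {k : ι → ℕ // k i = 0 ∧ ∑ j, k j = N} ≃ (univ.erase i).finsuppAntidiag N :=
  Finsupp.equivFunOnFinite.symm.subtypeEquiv fun k => by
    rw [mem_finsuppAntidiag, ← add_sum_erase _ _ (mem_univ i), subset_erase]
    simp only [Finsupp.coe_equivFunOnFinite_symm, subset_univ, Finsupp.mem_support_iff, ne_eq,
      not_not, true_and]
    constructor
    · rintro ⟨h0, hsum⟩
      exact ⟨by rwa [h0, zero_add] at hsum, h0⟩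
    · rintro ⟨hsum, h0⟩
      exact ⟨h0, by rwa [h0, zero_add]⟩

lemma span_range_eq_of_injective {K V ι : Type*} [Field K] [AddCommGroup V] [Module K V]
    [Fintype ι] {S : Submodule K V} {v : ι → V} (hv : LinearIndependent K v) (hvS : ∀ i, v i ∈ S)
    {f : S →ₗ[K] ι → K} (hf : Injective f) : Submodule.span K (Set.range v) = S := by
  have : FiniteDimensional K S := .of_injective f hf
  refine Submodule.eq_of_le_of_finrank_le (Submodule.span_le.2 (Set.range_subset_iff.2 hvS)) ?_
  rw [finrank_span_eq_card hv, ← Module.finrank_fintype_fun_eq_card K]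
  exact LinearMap.finrank_le_finrank_of_injective hf

lemma mem_completeComplex {n d : ℕ} {σ : Fin n → ℕ} :
    σ ∈ completeComplex n d ↔ ∑ i, σ i = d + 1 := by
  refine ⟨fun h => (mem_filter.1 h).2,
    fun h => mem_filter.2 ⟨Fintype.mem_piFinset.2 fun i => mem_range.2 ?_, h⟩⟩
  have := single_le_sum (fun j _ => Nat.zero_le (σ j)) (mem_univ i)
  omega

lemma mult_eq_zero_of_not_le {n : ℕ} {T σ : Fin n → ℕ} (h : ¬T ≤ σ) : mult T σ = 0 := by
  obtain ⟨i, hi⟩ : ∃ i, σ i < T i := by simpa [Pi.le_def] using h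
  exact prod_eq_zero (mem_univ i) (Nat.choose_eq_zero_of_lt hi)

lemma mult_update_self {n m : ℕ} {σ : Fin n → ℕ} {i : Fin n} (hσ : σ i = m + 1) :
    mult (update σ i m) σ = m + 1 := by
  rw [mult, prod_eq_single i (fun j _ hj => by rw [update_of_ne hj, Nat.choose_self])
    (by simp), update_self, hσ, Nat.choose_succ_self_right]

abbrev avoidingFaces (n d : ℕ) (i : Fin n) := {σ : Fin n → ℕ // σ i = 0 ∧ ∑ j, σ j = d + 1}

instance {n d : ℕ} {i : Fin n} : Finite (avoidingFaces n d i) :=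
  .of_equiv _ (equivFinsuppAntidiagErase i (d + 1)).symm

lemma natCard_avoidingFaces {n d : ℕ} (i : Fin n) :
    Nat.card (avoidingFaces n d i) = (n + d - 1).choose (d + 1) := by
  rw [Nat.card_congr (equivFinsuppAntidiagErase i (d + 1)), Nat.card_eq_fintype_card,
    Fintype.card_coe, card_finsuppAntidiag_nat_eq_choose, card_erase_of_mem (mem_univ i),
    card_univ, Fintype.card_fin]
  have := i.pos
  congr 1
  omega

section Balancing

variable {K : Type*} [Field K] {n d : ℕ}

lemma mem_balancingSpace_iff {w : (Fin n → ℕ) → K} :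
    w ∈ balancingSpace K n d ↔ (∀ σ ∉ completeComplex n d, w σ = 0) ∧
      ∀ T : Fin n → ℕ, ∑ i, T i ≤ d → ∑ σ ∈ completeComplex n d, (mult T σ : K) * w σ = 0 := by
  simp [balancingSpace, Submodule.mem_iInf]

lemma coeff_mem_balancingSpace {P : MvPolynomial (Fin n) K} (hP : P.IsHomogeneous (d + 1))
    (hinv : aeval (fun i => X i + 1) P = P) :
    (fun σ => coeff (Finsupp.equivFunOnFinite.symm σ) P) ∈ balancingSpace K n d := by
  have hcoeff (σ : Fin n → ℕ) (hσ : ∑ i, σ i ≠ d + 1) :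
      coeff (Finsupp.equivFunOnFinite.symm σ) P = 0 :=
    hP.coeff_eq_zero (by simpa [Finsupp.degree_eq_sum] using hσ)
  refine mem_balancingSpace_iff.2 ⟨fun σ hσ => hcoeff σ (mt mem_completeComplex.2 hσ),
    fun T hT => ?_⟩
  have hsupp : P.support ⊆ (completeComplex n d).map Finsupp.equivFunOnFinite.symm.toEmbedding :=
    fun u hu => mem_map_equiv.2 <| mem_completeComplex.2 <| by
      by_contra h
      exact mem_support_iff.1 hu (by simpa using hcoeff u h)
  have := coeff_aeval_X_add_one hsupp (Finsupp.equivFunOnFinite.symm T)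
  rw [hinv, hcoeff T (by omega), sum_map] at this
  simpa [mult, mul_comm] using this.symm

lemma eq_zero_of_mem_balancingSpace [CharZero K] {w : (Fin n → ℕ) → K}
    (hw : w ∈ balancingSpace K n d) (i : Fin n) (h0 : ∀ σ : avoidingFaces n d i, w σ = 0) :
    w = 0 := by
  obtain ⟨hsupp, hbal⟩ := mem_balancingSpace_iff.1 hw
  suffices ∀ m σ, σ i = m → w σ = 0 from funext fun σ => this _ σ rfl
  intro m
  induction m using Nat.strong_induction_on with
  | _ m ih =>
  intro σ hσ
  by_cases hσC : σ ∈ completeComplex n d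
  swap
  · exact hsupp σ hσC
  obtain _ | m := m
  · exact h0 ⟨σ, hσ, mem_completeComplex.1 hσC⟩
  -- The balancing condition at `σ - {i}` sees `w σ` with multiplicity `m + 1`, and otherwise
  -- only faces containing fewer copies of `i`.
  have hT := hbal (update σ i m) (by
    have := sum_update_add_one hσ
    rw [mem_completeComplex.1 hσC] at this
    omega)
  rw [sum_eq_single_of_mem σ hσC, mult_update_self hσ] at hT
  · exact (mul_eq_zero.1 hT).resolve_left (Nat.cast_ne_zero.2 m.succ_ne_zero)
  intro σ' hσ' hne
  by_cases hle : update σ i m ≤ σ'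
  · have hsum : ∑ j, σ' j = ∑ j, σ j := by
      rw [mem_completeComplex.1 hσ', mem_completeComplex.1 hσC]
    rw [ih _ (Nat.lt_succ_of_le (apply_le_of_update_le hσ hle hsum hne)) σ' rfl, mul_zero]
  · rw [mult_eq_zero_of_not_le hle, Nat.cast_zero, zero_mul]

variable (K) in
lemma injective_funLeft_domRestrict_balancingSpace [CharZero K] (i : Fin n) :
    Injective ((LinearMap.funLeft K K (Subtype.val : avoidingFaces n d i → Fin n → ℕ)).domRestrict
      (balancingSpace K n d)) := by
  refine (injective_iff_map_eq_zero _).2 fun w hw => Subtype.ext ?_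
  exact eq_zero_of_mem_balancingSpace w.2 i fun σ => congrFun hw σ

end Balancing

section ProductWeighting

variable (K : Type*) [Field K] {n d : ℕ} (hn : 0 < n)

lemma productWeighting_mem_balancingSpace {k : Fin n → ℕ} (hk : ∑ j, k j = d + 1) :
    productWeighting K hn k ∈ balancingSpace K n d :=
  coeff_mem_balancingSpace (hk ▸ isHomogeneous_prod_X_sub_X_pow _ k)
    (aeval_X_add_one_prod_X_sub_X_pow _ k)

lemma productWeighting_apply_avoidingFaces (k : Fin n → ℕ) (σ : avoidingFaces n d ⟨0, hn⟩) :
    productWeighting K hn k σ = if σ.1 = k then (-1) ^ (∑ j, k j) else 0 :=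
  coeff_prod_X_sub_X_pow_of_apply_eq_zero _ k σ.1 σ.2.1

lemma linearIndependent_productWeighting :
    LinearIndependent K fun k : avoidingFaces n d ⟨0, hn⟩ => productWeighting K hn k.1 := by
  let restrict := LinearMap.funLeft K K (Subtype.val : avoidingFaces n d ⟨0, hn⟩ → Fin n → ℕ)
  refine LinearIndependent.of_comp restrict ?_
  have hdiag : restrict ∘ (fun k : avoidingFaces n d ⟨0, hn⟩ => productWeighting K hn k.1)
      = (fun _ => (-1) ^ (d + 1) : avoidingFaces n d ⟨0, hn⟩ → Kˣ) • ⇑(Pi.basisFun K _) := by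
    ext k σ
    simp [restrict, LinearMap.funLeft_apply, productWeighting_apply_avoidingFaces, k.2.2,
      Pi.single_apply, Subtype.ext_iff, Units.smul_def]
  rw [hdiag]
  exact (Pi.basisFun K _).linearIndependent.units_smul _

end ProductWeighting

/-- Over a characteristic-zero field `K`, the weighted complexes
`∏_{j=2}^{n} ({1} − {j})^{k_j}`, over all tuples of nonnegative integers with
`∑ k_j = d + 1`, form a basis of the space of balancings of the complete `d`-complex
`Δ_{n,d}`; in particular this space has dimension `C(n+d−1, d+1)`. -/
theorem complete_complex_balancing_basis (K : Type*) [Field K] [CharZero K]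
    (n d : ℕ) (hn : 0 < n) :
    (LinearIndependent K
      (fun k : {k : Fin n → ℕ // k ⟨0, hn⟩ = 0 ∧ ∑ j, k j = d + 1} =>
        productWeighting K hn k.1)
    ∧ Submodule.span K
        (Set.range (fun k : {k : Fin n → ℕ // k ⟨0, hn⟩ = 0 ∧ ∑ j, k j = d + 1} =>
          productWeighting K hn k.1))
        = balancingSpace K n d
    ∧ Module.finrank K (balancingSpace K n d) = (n + d - 1).choose (d + 1)) := by
  have := Fintype.ofFinite (avoidingFaces n d ⟨0, hn⟩)
  have hli := linearIndependent_productWeighting K (d := d) hn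
  have hspan := span_range_eq_of_injective hli
    (fun k => productWeighting_mem_balancingSpace K hn k.2.2)
    (injective_funLeft_domRestrict_balancingSpace K ⟨0, hn⟩)
  refine ⟨hli, hspan, ?_⟩
  rw [← hspan, finrank_span_eq_card hli, ← Nat.card_eq_fintype_card, natCard_avoidingFaces]
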